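/- arXiv:1802.07458 — 4 statements merged into one kernel-verified Lean document; each statement's English description precedes it below -/
import Mathlib

section
/- Let A ∈ 𝒜, B ∈ ℬ, C ∈ 𝒞 be arbitrary random variables on finite or countably infinite sets, and let B̃ ∈ ℬ, C̃ ∈ 𝒞 be random variables such that the pair (B̃, C̃) is independent of A. Let ψ₁ : 𝒜×ℬ → [0,1] and α₁ ∈ [0,1] satisfy P_A(a) P_{B̃}(b) ≥ α₁ ψ₁(a,b) P_{AB}(a,b) for all (a,b), and let ψ₂ : 𝒜×ℬ×𝒞 → [0,1] and α₂ ∈ [0,1] satisfy P_{AB}(a,b) P_{C̃|B̃}(c|b) ≥ α₂ ψ₂(a,b,c) P_{ABC}(a,b,c) for all (a,b,c). Then for any set ℱ ⊆ 𝒜×ℬ×𝒞 and any integers M₁, M₂ ≥ 1, E[ E[ E[ 𝟙{(A,B̃,C̃) ∉ ℱ} | A, B̃ ]^{M₂} | A ]^{M₁} ] ≤ 1 − E[ψ₁(A,B) ψ₂(A,B,C)] + Pr{(A,B,C) ∉ ℱ} + e^{−α₂ M₂ − log α₁} + e^{−α₁ M₁}. -/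
open scoped BigOperators
open Filter Topology

noncomputable section

/-- `p` is a probability mass function on `α`. -/
def IsPmf {α : Type*} (p : α → ℝ) : Prop :=
  (∀ a, 0 ≤ p a) ∧ HasSum p 1

/-- Probability of the set `S` under the pmf `p`. -/
def prS {α : Type*} (p : α → ℝ) (S : Set α) : ℝ :=
  ∑' a, Set.indicator S p a

/-- Smooth max Rényi divergence `D_∞^δ(P‖Q)`. -/
def Dinf {α : Type*} (P Q : α → ℝ) (δ : ℝ) : ℝ :=
  sInf { d : ℝ | ∃ ψ : α → ℝ, (∀ a, 0 ≤ ψ a ∧ ψ a ≤ 1) ∧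
    1 - δ ≤ ∑' a, ψ a * P a ∧
    d = max 0 (Real.log (⨆ a, ψ a * P a / Q a)) }

def margFst {α β : Type*} (π : α × β → ℝ) : α → ℝ := fun a => ∑' b, π (a, b)

def margSnd {α β : Type*} (π : α × β → ℝ) : β → ℝ := fun b => ∑' a, π (a, b)

/-- `I_∞^δ(A;B)` for a joint pmf `π` of the pair `(A,B)`:
`D_∞^δ(P_{AB} ‖ P_A × P_B)`. -/
def Iinf {α β : Type*} (π : α × β → ℝ) (δ : ℝ) : ℝ :=
  Dinf π (fun x => margFst π x.1 * margSnd π x.2) δ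

/-- `I_∞^δ(A;B|C)` for a joint pmf `π` of the triple `(A,B,C)`:
`D_∞^δ(P_{ABC} ‖ P_{AC} × P_{B|C})`. -/
def IinfCond {α β γ : Type*} (π : α × β × γ → ℝ) (δ : ℝ) : ℝ :=
  Dinf π (fun x => (∑' b, π (x.1, b, x.2.2)) *
    ((∑' a, π (a, x.2.1, x.2.2)) / (∑' a, ∑' b, π (a, b, x.2.2)))) δ

/-- The set whose infimum defines the limsup in probability. -/
def pLimsupSet {ι : ℕ → Type*} (p : ∀ n, ι n → ℝ) (S : ∀ n, ι n → ℝ) : Set ℝ :=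
  { c : ℝ | Tendsto (fun n => prS (p n) { w | c < S n w }) atTop (𝓝 0) }

/-- Limsup in probability of the sequence of random variables `S n`, the `n`-th
sample being distributed according to the pmf `p n`. -/
def pLimsup {ι : ℕ → Type*} (p : ∀ n, ι n → ℝ) (S : ∀ n, ι n → ℝ) : ℝ :=
  sInf (pLimsupSet p S)

def specSupMISet {A B : ℕ → Type*} (π : ∀ n, A n × B n → ℝ) : Set ℝ :=
  pLimsupSet π (fun n x =>
    (1 / (n : ℝ)) * Real.log ((π n x / margFst (π n) x.1) / margSnd (π n) x.2))

/-- Spectral sup-mutual information rate `Ī(A;B)` of a sequence of joint pmfs. -/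
def specSupMI {A B : ℕ → Type*} (π : ∀ n, A n × B n → ℝ) : ℝ :=
  sInf (specSupMISet π)

def specSupCMISet {A B C : ℕ → Type*} (π : ∀ n, A n × B n × C n → ℝ) : Set ℝ :=
  pLimsupSet π (fun n x =>
    (1 / (n : ℝ)) * Real.log (
      (π n x / (∑' b, π n (x.1, b, x.2.2))) /
      ((∑' a, π n (a, x.2.1, x.2.2)) / (∑' a, ∑' b, π n (a, b, x.2.2)))))

/-- Conditional spectral sup-mutual information rate `Ī(A;B|C)`. -/
def specSupCMI {A B C : ℕ → Type*} (π : ∀ n, A n × B n × C n → ℝ) : ℝ :=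
  sInf (specSupCMISet π)

/-- A code for the (one-shot) successive refinement problem. -/
structure SRCode (𝒳 𝒴 𝒵 : Type*) (M₁ M₂ : ℕ) where
  f₁ : 𝒳 → Fin M₁
  f₂ : 𝒳 → Fin M₂
  φ₁ : Fin M₁ → 𝒴
  φ₂ : Fin M₁ → Fin M₂ → 𝒵

/-- `((M₁,M₂),(D₁,D₂))` is `(ε₁,ε₂)`-achievable. -/
def EpsAchievable {𝒳 𝒴 𝒵 : Type*} (pX : 𝒳 → ℝ)
    (d₁ : 𝒳 → 𝒴 → ℝ) (d₂ : 𝒳 → 𝒵 → ℝ)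
    (D₁ D₂ ε₁ ε₂ : ℝ) (M₁ M₂ : ℕ) : Prop :=
  ∃ C : SRCode 𝒳 𝒴 𝒵 M₁ M₂,
    prS pX { x | D₁ < d₁ x (C.φ₁ (C.f₁ x)) } ≤ ε₁ ∧
    prS pX { x | D₂ < d₂ x (C.φ₂ (C.f₁ x) (C.f₂ x)) } ≤ ε₂

/-- The set `𝓜(D,ε|X)` of pairs of numbers of codewords. -/
def MSet {𝒳 𝒴 𝒵 : Type*} (pX : 𝒳 → ℝ)
    (d₁ : 𝒳 → 𝒴 → ℝ) (d₂ : 𝒳 → 𝒵 → ℝ) (D₁ D₂ ε₁ ε₂ : ℝ) : Set (ℕ × ℕ) :=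
  { m | 0 < m.1 ∧ 0 < m.2 ∧ EpsAchievable pX d₁ d₂ D₁ D₂ ε₁ ε₂ m.1 m.2 }

/-- A sequence of codes for the successive refinement problem. -/
structure SRCodeSeq (𝒳 𝒴 𝒵 : ℕ → Type*) where
  M₁ : ℕ → ℕ
  M₂ : ℕ → ℕ
  hM₁ : ∀ n, 0 < M₁ n
  hM₂ : ∀ n, 0 < M₂ n
  f₁ : ∀ n, 𝒳 n → Fin (M₁ n)
  f₂ : ∀ n, 𝒳 n → Fin (M₂ n)
  φ₁ : ∀ n, Fin (M₁ n) → 𝒴 n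
  φ₂ : ∀ n, Fin (M₁ n) → Fin (M₂ n) → 𝒵 n

/-- `(R,D)` is fm-achievable for the general source `pX`. -/
def FmAchievable {𝒳 𝒴 𝒵 : ℕ → Type*} (pX : ∀ n, 𝒳 n → ℝ)
    (d₁ : ∀ n, 𝒳 n → 𝒴 n → ℝ) (d₂ : ∀ n, 𝒳 n → 𝒵 n → ℝ)
    (R₁ R₂ D₁ D₂ : ℝ) : Prop :=
  ∃ C : SRCodeSeq 𝒳 𝒴 𝒵,
    pLimsup pX (fun n x => d₁ n x (C.φ₁ n (C.f₁ n x))) ≤ D₁ ∧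
    pLimsup pX (fun n x => d₂ n x (C.φ₂ n (C.f₁ n x) (C.f₂ n x))) ≤ D₂ ∧
    Filter.limsup (fun n : ℕ => (1 / (n : ℝ)) * Real.log (C.M₁ n)) atTop ≤ R₁ ∧
    Filter.limsup (fun n : ℕ => (1 / (n : ℝ)) * Real.log (C.M₂ n)) atTop ≤ R₂

/-- The rate-distortion region `𝓡(D|𝐗)`. -/
def RDRegion {𝒳 𝒴 𝒵 : ℕ → Type*} (pX : ∀ n, 𝒳 n → ℝ)
    (d₁ : ∀ n, 𝒳 n → 𝒴 n → ℝ) (d₂ : ∀ n, 𝒳 n → 𝒵 n → ℝ)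
    (D₁ D₂ : ℝ) : Set (ℝ × ℝ) :=
  { R | 0 ≤ R.1 ∧ 0 ≤ R.2 ∧ FmAchievable pX d₁ d₂ R.1 R.2 D₁ D₂ }

/-- Shannon mutual information of a joint pmf. -/
def mutualInfo {α β : Type*} (π : α × β → ℝ) : ℝ :=
  ∑' x : α × β, π x * Real.log (π x / (margFst π x.1 * margSnd π x.2))

/-!
Both levels of the bound come from one inequality. Draw `M` candidates `i` independently from a
law `ν`, let `h i` be the chance that candidate `i` fails, and suppose `s ψ i p i ≤ (∑ p) ν i`
for a weight `p`. Then a single candidate succeeds with probability at least `s t`, where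
`t = ∑ ψ p (1 - h) / ∑ p`, and by convexity of `exp`
`(1 - s t) ^ M ≤ exp (-s t M) ≤ 1 - t + t exp (-s M)`.
Applied to `C̃` for fixed `(a, b)` with `α₂`, and then to `B̃` for fixed `a` with `α₁`, the
accumulated loss is `1 - E[ψ₁ ψ₂] + Pr{(A,B,C) ∉ F} + exp (-α₂ M₂) + exp (-α₁ M₁)`, and
`exp (-α₂ M₂) ≤ exp (-α₂ M₂ - log α₁)` because `log α₁ ≤ 0`.
-/
theorem pow_le_one_sub_add_exp_neg {x s t : ℝ} (M : ℕ) (hx : 0 ≤ x) (hxt : x ≤ 1 - s * t)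
    (ht₀ : 0 ≤ t) (ht₁ : t ≤ 1) : x ^ M ≤ 1 - t + Real.exp (-(s * M)) := by
  have hconv := convexOn_exp.2 (Set.mem_univ (-(s * M))) (Set.mem_univ 0) ht₀ (sub_nonneg.2 ht₁)
    (add_sub_cancel t 1)
  simp only [smul_eq_mul, mul_zero, add_zero, Real.exp_zero, mul_one] at hconv
  calc x ^ M ≤ Real.exp (-(s * t)) ^ M :=
        pow_le_pow_left₀ hx (hxt.trans (by linarith [Real.add_one_le_exp (-(s * t))])) M
    _ = Real.exp (t * -(s * M)) := by rw [← Real.exp_nat_mul]; ring_nf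
    _ ≤ t * Real.exp (-(s * M)) + (1 - t) := hconv
    _ ≤ 1 - t + Real.exp (-(s * M)) := by nlinarith [Real.exp_pos (-(s * M))]

theorem mul_pow_le_sub_add_mul_exp_neg {P u x s : ℝ} (M : ℕ) (hx : 0 ≤ x) (hu : 0 ≤ u)
    (huP : u ≤ P) (h : s * u ≤ P * (1 - x)) : P * x ^ M ≤ P - u + P * Real.exp (-(s * M)) := by
  rcases (hu.trans huP).eq_or_lt with rfl | hP
  · simp [le_antisymm huP hu]
  have hxt : x ≤ 1 - s * (u / P) := by
    rw [mul_div_assoc', le_sub_comm, div_le_iff₀ hP]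
    linarith
  have key := pow_le_one_sub_add_exp_neg M hx hxt (div_nonneg hu hP.le) ((div_le_one hP).2 huP)
  calc P * x ^ M ≤ P * (1 - u / P + Real.exp (-(s * M))) := mul_le_mul_of_nonneg_left key hP.le
    _ = P - u + P * Real.exp (-(s * M)) := by field_simp

theorem Summable.mul_of_nonneg_of_le_one {ι : Type*} {f w : ι → ℝ} (hf : Summable f)
    (hf₀ : ∀ i, 0 ≤ f i) (hw : ∀ i, 0 ≤ w i ∧ w i ≤ 1) : Summable fun i => f i * w i :=
  hf.of_nonneg_of_le (fun i => mul_nonneg (hf₀ i) (hw i).1)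
    fun i => mul_le_of_le_one_right (hf₀ i) (hw i).2

namespace IsPmf

variable {ι : Type*} {p ν ψ h : ι → ℝ} {s : ℝ}

theorem tsum_subtype_mem_Icc (hν : IsPmf ν) (S : Set ι) :
    0 ≤ ∑' i : S, ν i ∧ ∑' i : S, ν i ≤ 1 :=
  ⟨tsum_nonneg fun i => hν.1 i,
    (hν.2.summable.tsum_subtype_le ν S hν.1).trans_eq hν.2.tsum_eq⟩

theorem mul_tsum_mul_pow_le (hν : IsPmf ν) (M : ℕ) (hp₀ : ∀ i, 0 ≤ p i) (hp : Summable p)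
    (hψ : ∀ i, 0 ≤ ψ i ∧ ψ i ≤ 1) (hh : ∀ i, 0 ≤ h i ∧ h i ≤ 1)
    (hdom : ∀ i, s * ψ i * p i ≤ (∑' j, p j) * ν i) :
    (∑' i, p i) * (∑' i, ν i * h i) ^ M ≤
      ∑' i, p i - ∑' i, ψ i * p i * (1 - h i) + (∑' i, p i) * Real.exp (-(s * M)) := by
  obtain ⟨hν₀, hν₁⟩ := hν
  have hνh := hν₁.summable.mul_of_nonneg_of_le_one hν₀ hh
  have hνh' : Summable fun i => ν i * (1 - h i) :=
    (hν₁.summable.sub hνh).congr fun i => by ring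
  have hu₀ : ∀ i, 0 ≤ ψ i * p i * (1 - h i) := fun i =>
    mul_nonneg (mul_nonneg (hψ i).1 (hp₀ i)) (sub_nonneg.2 (hh i).2)
  have hup : ∀ i, ψ i * p i * (1 - h i) ≤ p i := fun i => by
    nlinarith [hψ i, hh i, hp₀ i, mul_nonneg (hψ i).1 (hh i).1]
  have hu : Summable fun i => ψ i * p i * (1 - h i) := hp.of_nonneg_of_le hu₀ hup
  have hfail : 1 - ∑' i, ν i * h i = ∑' i, ν i * (1 - h i) :=
    (hν₁.sub hνh.hasSum).tsum_eq.symm.trans (tsum_congr fun i => by ring)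
  refine mul_pow_le_sub_add_mul_exp_neg M (tsum_nonneg fun i => mul_nonneg (hν₀ i) (hh i).1)
    (tsum_nonneg hu₀) (hu.tsum_le_tsum hup hp) ?_
  rw [hfail, ← tsum_mul_left, ← tsum_mul_left]
  refine (hu.mul_left s).tsum_le_tsum (fun i => ?_) (hνh'.mul_left _)
  nlinarith [mul_le_mul_of_nonneg_right (hdom i) (sub_nonneg.2 (hh i).2)]

theorem tsum_sub_indicator_sub_le {w : ℝ} {S : Set ι} (hν : IsPmf ν) (M : ℕ)
    (hp₀ : ∀ i, 0 ≤ p i) (hp : Summable p) (hw : 0 ≤ w ∧ w ≤ 1) (hψ : ∀ i, 0 ≤ ψ i ∧ ψ i ≤ 1)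
    (hdom : ∀ i, s * ψ i * p i ≤ (∑' j, p j) * ν i) :
    ∑' i, (p i * (w * ψ i) - S.indicator p i) - (∑' i, p i) * Real.exp (-(s * M)) ≤
      w * (∑' i, p i) * (1 - (∑' i : S, ν i) ^ M) := by
  have hind : ∀ i, 0 ≤ S.indicator (1 : ι → ℝ) i ∧ S.indicator (1 : ι → ℝ) i ≤ 1 := fun i => by
    by_cases hi : i ∈ S <;> simp [hi]
  have key := hν.mul_tsum_mul_pow_le M hp₀ hp hψ hind hdom
  have hfail : ∑' i, ν i * S.indicator 1 i = ∑' i : S, ν i := by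
    rw [tsum_subtype]
    exact tsum_congr fun i => by by_cases hi : i ∈ S <;> simp [hi]
  have hgain : Summable fun i => p i * (w * ψ i) - S.indicator p i :=
    (hp.mul_of_nonneg_of_le_one hp₀ fun i =>
      ⟨mul_nonneg hw.1 (hψ i).1, mul_le_one₀ hw.2 (hψ i).1 (hψ i).2⟩).sub (hp.indicator S)
  have hsucc : Summable fun i => ψ i * p i * (1 - S.indicator 1 i) :=
    hp.of_nonneg_of_le (fun i => by by_cases hi : i ∈ S <;> simp [hi, mul_nonneg (hψ i).1 (hp₀ i)])
      (fun i => by by_cases hi : i ∈ S <;> simp [hi, hp₀ i, mul_le_of_le_one_left (hp₀ i) (hψ i).2])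
  have hle : ∑' i, (p i * (w * ψ i) - S.indicator p i) ≤
      w * ∑' i, ψ i * p i * (1 - S.indicator 1 i) := by
    rw [← tsum_mul_left]
    refine hgain.tsum_le_tsum (fun i => ?_) (hsucc.mul_left w)
    by_cases hi : i ∈ S
    · simp only [hi, Set.indicator_of_mem, Pi.one_apply, sub_self, mul_zero]
      nlinarith [hp₀ i, mul_le_one₀ hw.2 (hψ i).1 (hψ i).2]
    · simp only [hi, not_false_eq_true, Set.indicator_of_notMem, sub_zero, mul_one]
      linarith [show p i * (w * ψ i) = w * (ψ i * p i) by ring]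
  rw [hfail] at key
  have hP : 0 ≤ (∑' i, p i) * Real.exp (-(s * M)) := mul_nonneg (tsum_nonneg hp₀) (Real.exp_pos _).le
  nlinarith [mul_le_mul_of_nonneg_left key hw.1]

end IsPmf

section TripleSum

variable {α β γ E : Type*} [AddCommGroup E] [UniformSpace E] [IsUniformAddGroup E]
  [CompleteSpace E] [T0Space E] {f : α × β × γ → E}

theorem Summable.prod_prod (hf : Summable f) : Summable fun a => ∑' b, ∑' c, f (a, b, c) :=
  hf.prod.congr fun a => (hf.prod_factor a).tsum_prod

theorem Summable.tsum_prod_prod (hf : Summable f) :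
    ∑' x, f x = ∑' a, ∑' b, ∑' c, f (a, b, c) :=
  hf.tsum_prod.trans (tsum_congr fun a => (hf.prod_factor a).tsum_prod)

end TripleSum

section Covering

variable {α β γ : Type*} {π : α × β × γ → ℝ} {q : β → ℝ} {r : β → γ → ℝ}
  {ψ₁ : α × β → ℝ} {ψ₂ : α × β × γ → ℝ} {α₁ α₂ : ℝ} {F : Set (α × β × γ)}

theorem summable_mul_ψ₁_mul_ψ₂ (hπ₀ : ∀ x, 0 ≤ π x) (hπ : Summable π)
    (hψ₁ : ∀ x, 0 ≤ ψ₁ x ∧ ψ₁ x ≤ 1) (hψ₂ : ∀ x, 0 ≤ ψ₂ x ∧ ψ₂ x ≤ 1) :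
    Summable fun x => π x * (ψ₁ (x.1, x.2.1) * ψ₂ x) :=
  hπ.mul_of_nonneg_of_le_one hπ₀ fun x =>
    ⟨mul_nonneg (hψ₁ _).1 (hψ₂ x).1, mul_le_one₀ (hψ₁ _).2 (hψ₂ x).1 (hψ₂ x).2⟩

theorem covering_bound_fiber (hπ₀ : ∀ x, 0 ≤ π x) (hπ : Summable π) (hq : IsPmf q)
    (hr : ∀ b, IsPmf (r b)) (hψ₁ : ∀ x, 0 ≤ ψ₁ x ∧ ψ₁ x ≤ 1) (hψ₂ : ∀ x, 0 ≤ ψ₂ x ∧ ψ₂ x ≤ 1)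
    (h₁ : ∀ a b, α₁ * ψ₁ (a, b) * (∑' c, π (a, b, c)) ≤ (∑' b', ∑' c', π (a, b', c')) * q b)
    (h₂ : ∀ a b c, α₂ * ψ₂ (a, b, c) * π (a, b, c) ≤ (∑' c', π (a, b, c')) * r b c)
    (M₁ M₂ : ℕ) (a : α) :
    (∑' b', ∑' c', π (a, b', c')) *
        (∑' b, q b * (∑' c : {c : γ // (a, b, c) ∉ F}, r b c.val) ^ M₂) ^ M₁ ≤
      ∑' b, ∑' c, π (a, b, c) -
        ∑' b, ∑' c, (π (a, b, c) * (ψ₁ (a, b) * ψ₂ (a, b, c)) - {x | x ∉ F}.indicator π (a, b, c)) +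
        (∑' b, ∑' c, π (a, b, c)) * (Real.exp (-(α₂ * M₂)) + Real.exp (-(α₁ * M₁))) := by
  have hπa : Summable fun y : β × γ => π (a, y) := hπ.prod_factor a
  have hP : Summable fun b => ∑' c, π (a, b, c) := hπa.prod
  have hfail : ∀ b, 0 ≤ (∑' c : {c : γ // (a, b, c) ∉ F}, r b c.val) ^ M₂ ∧
      (∑' c : {c : γ // (a, b, c) ∉ F}, r b c.val) ^ M₂ ≤ 1 := fun b =>
    have hg := (hr b).tsum_subtype_mem_Icc {c | (a, b, c) ∉ F}
    ⟨pow_nonneg hg.1 M₂, pow_le_one₀ hg.1 hg.2⟩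
  have hfiber : ∀ b, ∑' c,
        (π (a, b, c) * (ψ₁ (a, b) * ψ₂ (a, b, c)) - {x | x ∉ F}.indicator π (a, b, c)) -
        (∑' c, π (a, b, c)) * Real.exp (-(α₂ * M₂)) ≤
      ψ₁ (a, b) * (∑' c, π (a, b, c)) * (1 - (∑' c : {c : γ // (a, b, c) ∉ F}, r b c.val) ^ M₂) :=
    fun b => (hr b).tsum_sub_indicator_sub_le M₂ (fun c => hπ₀ _) (hπa.prod_factor b) (hψ₁ (a, b))
      (fun c => hψ₂ _) (h₂ a b)
  have hstep := hq.mul_tsum_mul_pow_le M₁ (fun b => tsum_nonneg fun c => hπ₀ _) hP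
    (fun b => hψ₁ (a, b)) hfail (h₁ a)
  have hgain : Summable fun b => ∑' c,
      (π (a, b, c) * (ψ₁ (a, b) * ψ₂ (a, b, c)) - {x | x ∉ F}.indicator π (a, b, c)) :=
    (((summable_mul_ψ₁_mul_ψ₂ hπ₀ hπ hψ₁ hψ₂).sub (hπ.indicator _)).prod_factor a).prod
  have hsucc : Summable fun b => ψ₁ (a, b) * (∑' c, π (a, b, c)) *
      (1 - (∑' c : {c : γ // (a, b, c) ∉ F}, r b c.val) ^ M₂) :=
    hP.of_nonneg_of_le
      (fun b => mul_nonneg (mul_nonneg (hψ₁ _).1 (tsum_nonneg fun c => hπ₀ _))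
        (sub_nonneg.2 (hfail b).2))
      (fun b => (mul_le_of_le_one_right (mul_nonneg (hψ₁ _).1 (tsum_nonneg fun c => hπ₀ _))
        (by linarith [(hfail b).1])).trans
        (mul_le_of_le_one_left (tsum_nonneg fun c => hπ₀ _) (hψ₁ _).2))
  have hsum := (hgain.sub (hP.mul_right (Real.exp (-(α₂ * M₂))))).tsum_le_tsum hfiber hsucc
  rw [hgain.tsum_sub (hP.mul_right _), tsum_mul_right] at hsum
  linarith

end Covering

/-- `π` is the joint pmf of `(A,B,C)`, `q` the pmf of `B̃` and `r b` the conditional pmf of `C̃`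
given `B̃ = b`; `∑' b, ∑' c, π (a, b, c)` is `P_A(a)` and `∑' c, π (a, b, c)` is `P_{AB}(a,b)`. -/
theorem covering_lemma_bound_general {α β γ : Type*}
    (π : α × β × γ → ℝ) (hπ : IsPmf π)
    (q : β → ℝ) (r : β → γ → ℝ) (hq : IsPmf q) (hr : ∀ b, IsPmf (r b))
    (ψ₁ : α × β → ℝ) (hψ₁ : ∀ x, 0 ≤ ψ₁ x ∧ ψ₁ x ≤ 1)
    (ψ₂ : α × β × γ → ℝ) (hψ₂ : ∀ x, 0 ≤ ψ₂ x ∧ ψ₂ x ≤ 1)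
    (α₁ α₂ : ℝ) (hα₁ : α₁ ∈ Set.Icc (0:ℝ) 1)
    (h₁ : ∀ a b, α₁ * ψ₁ (a, b) * (∑' c, π (a, b, c)) ≤
      (∑' b', ∑' c', π (a, b', c')) * q b)
    (h₂ : ∀ a b c, α₂ * ψ₂ (a, b, c) * π (a, b, c) ≤
      (∑' c', π (a, b, c')) * r b c)
    (F : Set (α × β × γ)) (M₁ M₂ : ℕ) :
    (∑' a, (∑' b', ∑' c', π (a, b', c')) *
        (∑' b, q b * (∑' c : {c : γ // (a, b, c) ∉ F}, r b c.val) ^ M₂) ^ M₁) ≤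
    1 - (∑' x, π x * (ψ₁ (x.1, x.2.1) * ψ₂ x)) + prS π {x | x ∉ F}
      + Real.exp (-α₂ * M₂ - Real.log α₁) + Real.exp (-α₁ * M₁) := by
  obtain ⟨hπ₀, hπ₁⟩ := hπ
  have hE := summable_mul_ψ₁_mul_ψ₂ hπ₀ hπ₁.summable hψ₁ hψ₂
  have hN := hπ₁.summable.indicator {x | x ∉ F}
  have hfiber := covering_bound_fiber (F := F) hπ₀ hπ₁.summable hq hr hψ₁ hψ₂ h₁ h₂ M₁ M₂
  have hP := hπ₁.summable.prod_prod
  have hΦ := (hE.sub hN).prod_prod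
  have hK := hP.mul_right (Real.exp (-(α₂ * M₂)) + Real.exp (-(α₁ * M₁)))
  have hbound := (hP.sub hΦ).add hK
  have hfiber₀ : ∀ a, 0 ≤ (∑' b', ∑' c', π (a, b', c')) *
      (∑' b, q b * (∑' c : {c : γ // (a, b, c) ∉ F}, r b c.val) ^ M₂) ^ M₁ := fun a =>
    mul_nonneg (tsum_nonneg fun b => tsum_nonneg fun c => hπ₀ _) (pow_nonneg (tsum_nonneg fun b =>
      mul_nonneg (hq.1 b) (pow_nonneg (tsum_nonneg fun c => (hr b).1 _) M₂)) M₁)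
  have hexp : Real.exp (-(α₂ * M₂)) ≤ Real.exp (-α₂ * M₂ - Real.log α₁) :=
    Real.exp_le_exp.2 (by linarith [Real.log_nonpos hα₁.1 hα₁.2])
  calc _ ≤ _ := (hbound.of_nonneg_of_le hfiber₀ hfiber).tsum_le_tsum hfiber hbound
    _ = 1 - ∑' x, (π x * (ψ₁ (x.1, x.2.1) * ψ₂ x) - {x | x ∉ F}.indicator π x) +
          (Real.exp (-(α₂ * M₂)) + Real.exp (-(α₁ * M₁))) := by
      rw [(hP.sub hΦ).tsum_add hK, hP.tsum_sub hΦ, tsum_mul_right, ← hπ₁.summable.tsum_prod_prod,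
        ← (hE.sub hN).tsum_prod_prod, hπ₁.tsum_eq, one_mul]
    _ ≤ _ := by
      rw [hE.tsum_sub hN, neg_mul α₁]
      unfold prS
      linarith

/-- Lemma 2, bound for the covering lemma.
Here `π` is the joint pmf of `(A,B,C)`, `q` is the pmf of `B̃` and `r b` is the
conditional pmf of `C̃` given `B̃ = b` (so that `(B̃,C̃)` is independent of `A`).
`∑' b, ∑' c, π (a, b, c)` is `P_A(a)` and `∑' c, π (a, b, c)` is `P_{AB}(a,b)`. -/
theorem covering_lemma_bound {α β γ : Type*}
    [Countable α] [Countable β] [Countable γ]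
    (π : α × β × γ → ℝ) (hπ : IsPmf π)
    (q : β → ℝ) (r : β → γ → ℝ) (hq : IsPmf q) (hr : ∀ b, IsPmf (r b))
    (ψ₁ : α × β → ℝ) (hψ₁ : ∀ x, 0 ≤ ψ₁ x ∧ ψ₁ x ≤ 1)
    (ψ₂ : α × β × γ → ℝ) (hψ₂ : ∀ x, 0 ≤ ψ₂ x ∧ ψ₂ x ≤ 1)
    (α₁ α₂ : ℝ) (hα₁ : α₁ ∈ Set.Icc (0:ℝ) 1) (hα₂ : α₂ ∈ Set.Icc (0:ℝ) 1)
    (h₁ : ∀ a b, α₁ * ψ₁ (a, b) * (∑' c, π (a, b, c)) ≤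
      (∑' b', ∑' c', π (a, b', c')) * q b)
    (h₂ : ∀ a b c, α₂ * ψ₂ (a, b, c) * π (a, b, c) ≤
      (∑' c', π (a, b, c')) * r b c)
    (F : Set (α × β × γ)) (M₁ M₂ : ℕ) (hM₁ : 1 ≤ M₁) (hM₂ : 1 ≤ M₂) :
    (∑' a, (∑' b', ∑' c', π (a, b', c')) *
        (∑' b, q b * (∑' c : {c : γ // (a, b, c) ∉ F}, r b c.val) ^ M₂) ^ M₁) ≤
    1 - (∑' x, π x * (ψ₁ (x.1, x.2.1) * ψ₂ x)) + prS π {x | x ∉ F}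
      + Real.exp (-α₂ * M₂ - Real.log α₁) + Real.exp (-α₁ * M₁) :=
  covering_lemma_bound_general π hπ q r hq hr ψ₁ hψ₁ ψ₂ hψ₂ α₁ α₂ hα₁ h₁ h₂ F M₁ M₂
end
end

section
/- Let X be a random variable on a finite or countably infinite set 𝒳 (the source), and let (Ũ, Ỹ, Z̃) be a triple of random variables on 𝒰×𝒴×𝒵 (finite or countably infinite sets) independent of X. Then for any real numbers D₁, D₂ ≥ 0 and any integers M₁, M₂ ≥ 1, there exist functions f₁ : 𝒳 → [1:M₁], f₂ : 𝒳 → [1:M₂], φ₁ : [1:M₁] → 𝒴, φ₂ : [1:M₁]×[1:M₂] → 𝒵 such that Pr{ d₁(X, φ₁(f₁(X))) > D₁ or d₂(X, φ₂(f₁(X), f₂(X))) > D₂ } ≤ E[ E[ E[ 𝟙{(X, Ũ, Ỹ, Z̃) ∉ 𝒟} | X, Ũ, Ỹ ]^{M₂} | X ]^{M₁} ], where 𝒟 = {(x,u,y,z) : d₁(x,y) ≤ D₁ and d₂(x,z) ≤ D₂}. -/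
/-!
Random superposition coding. Draw `M₁` cloud centres `(Ũᵢ, Ỹᵢ)` i.i.d. from `P_{ŨỸ}` and, for each
of them, `M₂` satellites `Z̃ᵢⱼ` i.i.d. from `P_{Z̃|ŨỸ}(·|Ũᵢ,Ỹᵢ)`; encode `x` by any pair `(i, j)`
with `d₁(x, Ỹᵢ) ≤ D₁` and `d₂(x, Z̃ᵢⱼ) ≤ D₂`. An error at `x` forces every pair to fail, and by
independence the probability of that, averaged over codebooks, is the iterated expectation of the
bound; some codebook does no worse than the average. The averaging is done with `ℝ≥0∞`-valued
weights, where sums need no summability, and transported back to `ℝ` by `toReal`.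
-/

open scoped BigOperators
open Filter Topology

noncomputable section

open scoped ENNReal

namespace ENNReal

theorem tsum_fin_pi_prod {α : Type*} (g : α → ℝ≥0∞) (n : ℕ) :
    ∑' f : Fin n → α, ∏ i, g (f i) = (∑' a, g a) ^ n := by
  induction n with
  | zero => simp
  | succ n ih =>
    rw [← (Fin.consEquiv fun _ => α).tsum_eq, ENNReal.tsum_prod', pow_succ', ← ih,
      ← ENNReal.tsum_mul_right]
    refine tsum_congr fun a => ?_
    rw [← ENNReal.tsum_mul_left]
    refine tsum_congr fun f => ?_
    simp [Fin.prod_univ_succ, Fin.consEquiv]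

theorem exists_le_tsum_mul {Ω : Type*} {μ : Ω → ℝ≥0∞} (hμ : ∑' ω, μ ω = 1) (f : Ω → ℝ≥0∞) :
    ∃ ω, f ω ≤ ∑' ω, μ ω * f ω := by
  by_contra! h
  obtain ⟨ω₀, hω₀⟩ : ∃ ω, μ ω ≠ 0 := by
    by_contra! h0
    simp [h0] at hμ
  set A := ∑' ω, μ ω * f ω
  have hμA : ∑' ω, μ ω * A = A := by rw [ENNReal.tsum_mul_right, hμ, one_mul]
  have hμ₀ : μ ω₀ ≠ ∞ := ne_top_of_le_ne_top one_ne_top (hμ ▸ ENNReal.le_tsum ω₀)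
  refine lt_irrefl A ?_
  calc A = ∑' ω, μ ω * A := hμA.symm
    _ < A := ENNReal.tsum_lt_tsum (by rw [hμA]; exact (h ω₀).ne_top)
        (fun ω => by gcongr; exact (h ω).le) ((ENNReal.mul_lt_mul_iff_right hω₀ hμ₀).2 (h ω₀))

theorem tsum_div_tsum_le_one {α : Type*} (f : α → ℝ≥0∞) : ∑' a, f a / ∑' b, f b ≤ 1 := by
  simp only [div_eq_mul_inv, ENNReal.tsum_mul_right]
  exact ENNReal.div_self_le_one

theorem tsum_div_tsum_mul_le_one {α : Type*} (f : α → ℝ≥0∞) {b : α → ℝ≥0∞}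
    (hb : b ≤ 1) : ∑' a, f a / (∑' a', f a') * b a ≤ 1 :=
  (ENNReal.tsum_le_tsum fun a => mul_le_of_le_one_right' (hb a)).trans
    (tsum_div_tsum_le_one f)

theorem tsum_div_tsum_eq_one {α : Type*} {f : α → ℝ≥0∞} (h0 : ∑' a, f a ≠ 0)
    (htop : ∑' a, f a ≠ ∞) : ∑' a, f a / ∑' b, f b = 1 := by
  simp only [div_eq_mul_inv, ENNReal.tsum_mul_right]
  exact ENNReal.mul_inv_cancel h0 htop

end ENNReal

section SuperpositionCoding

variable {𝒳 𝒲 𝒵 : Type*} {M₁ M₂ : ℕ}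

def superpositionCodebookWeight (P : 𝒲 → ℝ≥0∞) (K : 𝒲 → 𝒵 → ℝ≥0∞)
    (c : Fin M₁ → 𝒲 × (Fin M₂ → 𝒵)) : ℝ≥0∞ :=
  ∏ i, P (c i).1 * ∏ j, K (c i).1 ((c i).2 j)

theorem tsum_superpositionCodebookWeight_mul_prod (P : 𝒲 → ℝ≥0∞) (K : 𝒲 → 𝒵 → ℝ≥0∞)
    (g : 𝒲 → 𝒵 → ℝ≥0∞) :
    ∑' c : Fin M₁ → 𝒲 × (Fin M₂ → 𝒵),
        superpositionCodebookWeight P K c * ∏ i, ∏ j, g (c i).1 ((c i).2 j) =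
      (∑' w, P w * (∑' z, K w z * g w z) ^ M₂) ^ M₁ := by
  simp only [superpositionCodebookWeight, ← Finset.prod_mul_distrib, mul_assoc]
  rw [ENNReal.tsum_fin_pi_prod (fun c : 𝒲 × (Fin M₂ → 𝒵) =>
    P c.1 * ∏ j, (K c.1 (c.2 j) * g c.1 (c.2 j))), ENNReal.tsum_prod']
  congr 1
  refine tsum_congr fun w => ?_
  dsimp only
  rw [ENNReal.tsum_mul_left, ENNReal.tsum_fin_pi_prod (fun z => K w z * g w z)]

theorem tsum_superpositionCodebookWeight {P : 𝒲 → ℝ≥0∞} {K : 𝒲 → 𝒵 → ℝ≥0∞}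
    (hP : ∑' w, P w = 1) (hK : ∀ w, P w ≠ 0 → ∑' z, K w z = 1) :
    ∑' c : Fin M₁ → 𝒲 × (Fin M₂ → 𝒵), superpositionCodebookWeight P K c = 1 := by
  have h := tsum_superpositionCodebookWeight_mul_prod (M₁ := M₁) (M₂ := M₂) P K 1
  simp only [Pi.one_apply, Finset.prod_const_one, mul_one] at h
  rw [h]
  convert one_pow M₁
  rw [← hP]
  refine tsum_congr fun w => ?_
  by_cases hw : P w = 0
  · simp [hw]
  · simp [hK w hw]

theorem exists_superpositionCodebook_le (p : 𝒳 → ℝ≥0∞) {P : 𝒲 → ℝ≥0∞} {K : 𝒲 → 𝒵 → ℝ≥0∞}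
    (hP : ∑' w, P w = 1) (hK : ∀ w, P w ≠ 0 → ∑' z, K w z = 1) (b : 𝒳 → 𝒲 → 𝒵 → ℝ≥0∞) :
    ∃ c : Fin M₁ → 𝒲 × (Fin M₂ → 𝒵),
      ∑' x, p x * ∏ i, ∏ j, b x (c i).1 ((c i).2 j) ≤
        ∑' x, p x * (∑' w, P w * (∑' z, K w z * b x w z) ^ M₂) ^ M₁ := by
  obtain ⟨c, hc⟩ := ENNReal.exists_le_tsum_mul (tsum_superpositionCodebookWeight hP hK)
    fun c : Fin M₁ → 𝒲 × (Fin M₂ → 𝒵) => ∑' x, p x * ∏ i, ∏ j, b x (c i).1 ((c i).2 j)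
  refine ⟨c, hc.trans_eq ?_⟩
  simp only [← ENNReal.tsum_mul_left]
  rw [ENNReal.tsum_comm]
  refine tsum_congr fun x => ?_
  rw [← tsum_superpositionCodebookWeight_mul_prod, ← ENNReal.tsum_mul_left]
  exact tsum_congr fun c => mul_left_comm _ _ _

end SuperpositionCoding

theorem SRCode.exists_of_codebook {𝒳 𝒴 𝒵 : Type*} {M₁ M₂ : ℕ} (hM₁ : 0 < M₁) (hM₂ : 0 < M₂)
    (φ₁ : Fin M₁ → 𝒴) (φ₂ : Fin M₁ → Fin M₂ → 𝒵) (good : 𝒳 → 𝒴 → 𝒵 → Prop) :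
    ∃ C : SRCode 𝒳 𝒴 𝒵 M₁ M₂, ∀ x i j, good x (φ₁ i) (φ₂ i j) →
      good x (C.φ₁ (C.f₁ x)) (C.φ₂ (C.f₁ x) (C.f₂ x)) := by
  classical
  let e : 𝒳 → Fin M₁ × Fin M₂ := fun x =>
    if h : ∃ k : Fin M₁ × Fin M₂, good x (φ₁ k.1) (φ₂ k.1 k.2) then h.choose
    else (⟨0, hM₁⟩, ⟨0, hM₂⟩)
  refine ⟨⟨fun x => (e x).1, fun x => (e x).2, φ₁, φ₂⟩, fun x i j hij => ?_⟩
  have h : ∃ k : Fin M₁ × Fin M₂, good x (φ₁ k.1) (φ₂ k.1 k.2) := ⟨(i, j), hij⟩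
  simpa only [e, dif_pos h] using h.choose_spec

theorem IsPmf.tsum_ofReal {α : Type*} {p : α → ℝ} (hp : IsPmf p) :
    ∑' a, ENNReal.ofReal (p a) = 1 := by
  rw [← ENNReal.ofReal_tsum_of_nonneg hp.1 hp.2.summable, hp.2.tsum_eq, ENNReal.ofReal_one]

theorem prS_eq_toReal_tsum_indicator {α : Type*} {p : α → ℝ} (hp : ∀ a, 0 ≤ p a) (S : Set α) :
    prS p S = (∑' a, S.indicator (fun a => ENNReal.ofReal (p a)) a).toReal := by
  rw [prS, ENNReal.tsum_toReal_eq fun a => ?_]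
  · refine tsum_congr fun a => ?_
    by_cases ha : a ∈ S <;> simp [ha, hp a]
  · by_cases ha : a ∈ S <;> simp [ha]

section SuperpositionBound

variable {𝒳 𝒲 𝒵 : Type*} {L : 𝒲 → 𝒵 → ℝ≥0∞}

theorem tsum_mul_pow_tsum_div_tsum_le_one (n : ℕ) (hL : ∑' w, ∑' z, L w z ≤ 1)
    {b : 𝒲 → 𝒵 → ℝ≥0∞} (hb : b ≤ 1) :
    ∑' w, (∑' z, L w z) * (∑' z, L w z / (∑' z', L w z') * b w z) ^ n ≤ 1 :=
  le_trans (ENNReal.tsum_le_tsum fun w => mul_le_of_le_one_right'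
    (pow_le_one₀ zero_le (ENNReal.tsum_div_tsum_mul_le_one (L w) (hb w)))) hL

theorem toReal_tsum_mul_superposition (M₁ M₂ : ℕ) {p : 𝒳 → ℝ≥0∞} (hp : ∀ x, p x ≠ ∞)
    (hL : ∑' w, ∑' z, L w z ≤ 1) (bad : 𝒳 → 𝒲 → 𝒵 → Prop) :
    (∑' x, p x * (∑' w, (∑' z, L w z) *
        (∑' z, L w z / (∑' z', L w z') * {z | bad x w z}.indicator 1 z) ^ M₂) ^ M₁).toReal =
      ∑' x, (p x).toReal * (∑' w, (∑' z, (L w z).toReal) *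
        (∑' z : {z // bad x w z}, (L w z).toReal / ∑' z', (L w z').toReal) ^ M₂) ^ M₁ := by
  have hb : ∀ x, (fun w z => {z | bad x w z}.indicator (1 : 𝒵 → ℝ≥0∞) z) ≤ 1 :=
    fun x w => Set.indicator_le_self' fun _ _ => zero_le_one
  have hS : ∀ w, ∑' z, L w z ≠ ∞ := fun w =>
    ne_top_of_le_ne_top ENNReal.one_ne_top ((ENNReal.le_tsum w).trans hL)
  have hLfin : ∀ w z, L w z ≠ ∞ := fun w z => ne_top_of_le_ne_top (hS w) (ENNReal.le_tsum z)
  have hq : ∀ x w, ∑' z, L w z / (∑' z', L w z') * {z | bad x w z}.indicator 1 z ≠ ∞ :=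
    fun x w => ne_top_of_le_ne_top ENNReal.one_ne_top
      (ENNReal.tsum_div_tsum_mul_le_one (L w) (hb x w))
  have hI : ∀ x, ∑' w, (∑' z, L w z) *
      (∑' z, L w z / (∑' z', L w z') * {z | bad x w z}.indicator 1 z) ^ M₂ ≠ ∞ := fun x =>
    ne_top_of_le_ne_top ENNReal.one_ne_top (tsum_mul_pow_tsum_div_tsum_le_one M₂ hL (hb x))
  rw [ENNReal.tsum_toReal_eq fun x => ENNReal.mul_ne_top (hp x) (ENNReal.pow_ne_top (hI x))]
  refine tsum_congr fun x => ?_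
  rw [ENNReal.toReal_mul, ENNReal.toReal_pow, ENNReal.tsum_toReal_eq fun w =>
    ENNReal.mul_ne_top (hS w) (ENNReal.pow_ne_top (hq x w))]
  congr 2
  refine tsum_congr fun w => ?_
  rw [ENNReal.toReal_mul, ENNReal.toReal_pow, ENNReal.tsum_toReal_eq (hLfin w),
    ENNReal.tsum_toReal_eq fun z => ne_top_of_le_ne_top (hq x w) (ENNReal.le_tsum z)]
  congr 2
  refine (tsum_congr fun z => ?_).trans
    (tsum_subtype {z | bad x w z} fun z => (L w z).toReal / ∑' z', (L w z').toReal).symm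
  by_cases hz : bad x w z <;> simp [hz, ENNReal.toReal_div, ENNReal.tsum_toReal_eq (hLfin w)]

end SuperpositionBound

theorem code_existence_general {𝒳 𝒰 𝒴 𝒵 : Type*}
    (pX : 𝒳 → ℝ) (hpX : IsPmf pX)
    (lam : 𝒰 × 𝒴 × 𝒵 → ℝ) (hlam : IsPmf lam)
    (d₁ : 𝒳 → 𝒴 → ℝ) (d₂ : 𝒳 → 𝒵 → ℝ)
    (D₁ D₂ : ℝ)
    (M₁ M₂ : ℕ) (hM₁ : 1 ≤ M₁) (hM₂ : 1 ≤ M₂) :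
    ∃ C : SRCode 𝒳 𝒴 𝒵 M₁ M₂,
      prS pX { x | D₁ < d₁ x (C.φ₁ (C.f₁ x)) ∨
          D₂ < d₂ x (C.φ₂ (C.f₁ x) (C.f₂ x)) } ≤
      ∑' x, pX x *
        (∑' w : 𝒰 × 𝒴, (∑' z, lam (w.1, w.2, z)) *
          (∑' z : {z : 𝒵 // ¬(d₁ x w.2 ≤ D₁ ∧ d₂ x z ≤ D₂)},
            lam (w.1, w.2, z.val) / (∑' z', lam (w.1, w.2, z'))) ^ M₂) ^ M₁ := by
  set p : 𝒳 → ℝ≥0∞ := fun x => ENNReal.ofReal (pX x)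
  set L : 𝒰 × 𝒴 → 𝒵 → ℝ≥0∞ := fun w z => ENNReal.ofReal (lam (w.1, w.2, z))
  have hp : ∑' x, p x = 1 := hpX.tsum_ofReal
  have hL : ∑' w, ∑' z, L w z = 1 := by
    rw [← hlam.tsum_ofReal]
    exact ENNReal.tsum_prod'.symm.trans
      ((Equiv.prodAssoc 𝒰 𝒴 𝒵).tsum_eq fun t => ENNReal.ofReal (lam t))
  set bad : 𝒳 → 𝒰 × 𝒴 → 𝒵 → Prop := fun x w z => ¬(d₁ x w.2 ≤ D₁ ∧ d₂ x z ≤ D₂)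
  obtain ⟨c, hc⟩ := exists_superpositionCodebook_le (M₁ := M₁) (M₂ := M₂) p hL
    (fun w hw => ENNReal.tsum_div_tsum_eq_one hw
      (ne_top_of_le_ne_top ENNReal.one_ne_top (hL ▸ ENNReal.le_tsum w)))
    fun x w => {z | bad x w z}.indicator 1
  obtain ⟨C, hC⟩ := SRCode.exists_of_codebook hM₁ hM₂ (fun i => (c i).1.2) (fun i j => (c i).2 j)
    fun x y z => d₁ x y ≤ D₁ ∧ d₂ x z ≤ D₂
  refine ⟨C, ?_⟩
  have hRHS := toReal_tsum_mul_superposition M₁ M₂ (p := p) (fun x => ENNReal.ofReal_ne_top)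
    hL.le bad
  simp only [p, L, ENNReal.toReal_ofReal (hpX.1 _), ENNReal.toReal_ofReal (hlam.1 _)] at hRHS
  rw [prS_eq_toReal_tsum_indicator hpX.1, ← hRHS]
  refine ENNReal.toReal_mono ?_ ((ENNReal.tsum_le_tsum fun x => ?_).trans hc)
  · refine ne_top_of_le_ne_top ENNReal.one_ne_top (hp ▸ ENNReal.tsum_le_tsum fun x => ?_)
    exact mul_le_of_le_one_right' (pow_le_one₀ zero_le (tsum_mul_pow_tsum_div_tsum_le_one M₂
      hL.le fun w => Set.indicator_le_self' fun _ _ => zero_le_one))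
  by_cases hx : x ∈ {x | D₁ < d₁ x (C.φ₁ (C.f₁ x)) ∨ D₂ < d₂ x (C.φ₂ (C.f₁ x) (C.f₂ x))}
  · have hbad : ∀ i j, bad x (c i).1 ((c i).2 j) := fun i j =>
      mt (hC x i j) (not_and_or.2 (hx.imp not_le.2 not_le.2))
    simp [Set.indicator_of_mem hx, hbad, p]
  · simp [Set.indicator_of_notMem hx]

/-- Theorem 1, random coding existence bound.
`lam` is the joint pmf of the triple `(Ũ,Ỹ,Z̃)` which is independent of the
source `X`.  There is a code whose probability that either distortion level
is exceeded is bounded by the iterated-expectation expression, where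
`P_{ŨỸ}(u,y) = ∑' z, lam (u,y,z)` and
`P_{Z̃|ŨỸ}(z|u,y) = lam (u,y,z) / ∑' z', lam (u,y,z')`. -/
theorem code_existence {𝒳 𝒰 𝒴 𝒵 : Type*}
    [Countable 𝒳] [Countable 𝒰] [Countable 𝒴] [Countable 𝒵]
    (pX : 𝒳 → ℝ) (hpX : IsPmf pX)
    (lam : 𝒰 × 𝒴 × 𝒵 → ℝ) (hlam : IsPmf lam)
    (d₁ : 𝒳 → 𝒴 → ℝ) (d₂ : 𝒳 → 𝒵 → ℝ)
    (hd₁ : ∀ x y, 0 ≤ d₁ x y) (hd₂ : ∀ x z, 0 ≤ d₂ x z)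
    (D₁ D₂ : ℝ) (hD₁ : 0 ≤ D₁) (hD₂ : 0 ≤ D₂)
    (M₁ M₂ : ℕ) (hM₁ : 1 ≤ M₁) (hM₂ : 1 ≤ M₂) :
    ∃ C : SRCode 𝒳 𝒴 𝒵 M₁ M₂,
      prS pX { x | D₁ < d₁ x (C.φ₁ (C.f₁ x)) ∨
          D₂ < d₂ x (C.φ₂ (C.f₁ x) (C.f₂ x)) } ≤
      ∑' x, pX x *
        (∑' w : 𝒰 × 𝒴, (∑' z, lam (w.1, w.2, z)) *
          (∑' z : {z : 𝒵 // ¬(d₁ x w.2 ≤ D₁ ∧ d₂ x z ≤ D₂)},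
            lam (w.1, w.2, z.val) / (∑' z', lam (w.1, w.2, z'))) ^ M₂) ^ M₁ :=
  code_existence_general pX hpX lam hlam d₁ d₂ D₁ D₂ M₁ M₂ hM₁ hM₂
end
end

section
/- (Outer bound for the successive refinement problem.) Let X be a source on a finite or countably infinite set 𝒳, let D₁, D₂ ≥ 0 and ε₁, ε₂ > 0, and let 𝒰 be any finite or countably infinite set with |𝒰| ≥ |𝒳|. Then 𝓜(D, ε | X) ⊆ ⋃_{P_{UYZ|X} ∈ 𝒫(D, ε | X)} ⋂_{(δ₁,δ₂) ∈ (0,1]²} 𝓜_O(δ, P_{UYZ|X}), where 𝓜_O(δ, P_{UYZ|X}) ≜ {(M₁, M₂) ∈ ℕ² : log M₁ ≥ I_∞^{δ₁}(X; U, Y) + log δ₁ and log M₂ ≥ I_∞^{δ₂}(X; Z | U, Y) + log δ₂}, with (X, U, Y, Z) distributed according to P_X × P_{UYZ|X}. -/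
open scoped BigOperators
open Filter Topology

noncomputable section

/-!
Given a code, take the test channel to be deterministic: `U` is an injective encoding of a
canonical preimage of the first index `f₁ X`, `Y = φ₁ (f₁ X)` and `Z = φ₂ (f₁ X) (f₂ X)`.
Then the distortion events are those of the code, `(U, Y)` takes at most `M₁` values, and
`(U, Y)` determines `f₁ X`, so given `(U, Y)` the reproduction `Z` takes at most `M₂` values.
A variable with at most `M` values puts mass at most `δ` on its atoms of probability below
`δ / M`; smoothing by the indicator of the remaining atoms bounds the max-information density
by `log (M / δ)`.
-/
section

variable {α β γ ι ι' : Type*} {p : α → ℝ}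

theorem IsPmf.nonempty (hp : IsPmf p) : Nonempty α := by
  by_contra h
  rw [not_nonempty_iff] at h
  exact one_ne_zero (hp.2.unique hasSum_empty)

theorem prS_nonneg (hp : ∀ a, 0 ≤ p a) (S : Set α) : 0 ≤ prS p S :=
  tsum_nonneg fun a => Set.indicator_nonneg (fun a _ => hp a) a

theorem IsPmf.le_prS (hp : IsPmf p) {S : Set α} {a : α} (ha : a ∈ S) : p a ≤ prS p S := by
  unfold prS
  simpa [Set.indicator_of_mem ha] using
    (hp.2.summable.indicator S).le_tsum a fun b _ => Set.indicator_nonneg (fun b _ => hp.1 b) b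

theorem IsPmf.prS_mono (hp : IsPmf p) {S T : Set α} (h : S ⊆ T) : prS p S ≤ prS p T :=
  Summable.tsum_le_tsum (Set.indicator_le_indicator_of_subset h hp.1)
    (hp.2.summable.indicator S) (hp.2.summable.indicator T)

theorem IsPmf.prS_add_prS_compl (hp : IsPmf p) (S : Set α) : prS p S + prS p Sᶜ = 1 := by
  rw [prS, prS, ← Summable.tsum_add (hp.2.summable.indicator S) (hp.2.summable.indicator Sᶜ)]
  simp only [Set.indicator_self_add_compl_apply]
  exact hp.2.tsum_eq

theorem prS_eq_sum_inter_fiber [Fintype ι] (hp : Summable p) (κ : α → ι) (S : Set α) :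
    prS p S = ∑ i, prS p (S ∩ κ ⁻¹' {i}) := by
  classical
  unfold prS
  rw [← Summable.tsum_finsetSum fun i _ => hp.indicator _]
  refine tsum_congr fun a => ?_
  by_cases h : a ∈ S <;> simp [Set.indicator_apply, h]

theorem IsPmf.sum_prS_fiber [Fintype ι] (hp : IsPmf p) (κ : α → ι) :
    ∑ i, prS p (κ ⁻¹' {i}) = 1 := by
  simpa [prS, hp.2.tsum_eq] using (prS_eq_sum_inter_fiber hp.2.summable κ Set.univ).symm

theorem IsPmf.prS_fiber_lt_le [Fintype ι] (hp : IsPmf p) (κ : α → ι) {c : ι → ℝ}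
    (hc : ∀ i, 0 ≤ c i) : prS p {a | prS p (κ ⁻¹' {κ a}) < c (κ a)} ≤ ∑ i, c i := by
  rw [prS_eq_sum_inter_fiber hp.2.summable κ]
  refine Finset.sum_le_sum fun i _ => ?_
  by_cases hi : prS p (κ ⁻¹' {i}) < c i
  · exact (hp.prS_mono Set.inter_subset_right).trans hi.le
  · have hempty : {a | prS p (κ ⁻¹' {κ a}) < c (κ a)} ∩ κ ⁻¹' {i} = ∅ := by
      ext a
      simp only [Set.mem_inter_iff, Set.mem_ofPred_eq, Set.mem_preimage, Set.mem_singleton_iff,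
        Set.mem_empty_iff_false, iff_false, not_and]
      rintro h rfl
      exact hi h
    rw [hempty]
    simpa [prS] using hc i

theorem Dinf_le_log_of_witness {P Q : α → ℝ} {δ K : ℝ} (ψ : α → ℝ)
    (hψ : ∀ a, 0 ≤ ψ a ∧ ψ a ≤ 1) (hmass : 1 - δ ≤ ∑' a, ψ a * P a)
    (hnonneg : ∀ a, 0 ≤ ψ a * P a / Q a) (hratio : ∀ a, ψ a * P a / Q a ≤ K) (hK : 1 ≤ K) :
    Dinf P Q δ ≤ Real.log K := by
  have hle : Dinf P Q δ ≤ max 0 (Real.log (⨆ a, ψ a * P a / Q a)) :=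
    csInf_le ⟨0, by rintro d ⟨_, _, _, rfl⟩; exact le_max_left _ _⟩ ⟨ψ, hψ, hmass, rfl⟩
  refine hle.trans (max_le (Real.log_nonneg hK) ?_)
  rcases (Real.iSup_nonneg hnonneg).eq_or_lt with h | h
  · rw [← h, Real.log_zero]
    exact Real.log_nonneg hK
  · exact Real.log_le_log h (Real.iSup_le hratio (zero_le_one.trans hK))

def graphPmf (p : α → ℝ) (v : α → β) : α × β → ℝ :=
  {q | q.2 = v q.1}.indicator fun q => p q.1

theorem tsum_indicator_graph (v : α → β) (f : α × β → ℝ) :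
    ∑' q, {q : α × β | q.2 = v q.1}.indicator f q = ∑' a, f (a, v a) := by
  have hinj : Function.Injective fun a => (a, v a) := fun a b h => congrArg Prod.fst h
  rw [← hinj.tsum_eq]
  · simp
  · intro q hq
    exact ⟨q.1, Prod.ext rfl (Set.mem_of_indicator_ne_zero hq).symm⟩

theorem prS_graphPmf (v : α → β) (S : Set (α × β)) :
    prS (graphPmf p v) S = prS p {a | (a, v a) ∈ S} := by
  classical
  unfold prS graphPmf
  calc ∑' q, S.indicator ({q | q.2 = v q.1}.indicator fun q => p q.1) q
      = ∑' q, {q : α × β | q.2 = v q.1}.indicator (S.indicator fun q => p q.1) q := by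
        simp only [Set.indicator_indicator, Set.inter_comm]
    _ = ∑' a, S.indicator (fun q => p q.1) (a, v a) := tsum_indicator_graph v _
    _ = ∑' a, {a | (a, v a) ∈ S}.indicator p a := by simp [Set.indicator_apply]

theorem tsum_graphPmf_right (v : α → β) (a : α) : ∑' b, graphPmf p v (a, b) = p a := by
  classical
  simp [graphPmf, Set.indicator_apply]

theorem tsum_graphPmf_left (v : α → β) (b : β) :
    ∑' a, graphPmf p v (a, b) = prS p (v ⁻¹' {b}) := by
  classical
  unfold prS graphPmf
  refine tsum_congr fun a => ?_
  simp [Set.indicator_apply, eq_comm]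

theorem tsum_graphPmf_prodMk (z : α → γ) (v : α → β) (a : α) (b : β) :
    ∑' c, graphPmf p (fun a => (z a, v a)) (a, c, b) = graphPmf p v (a, b) := by
  classical
  by_cases h : b = v a <;> simp [graphPmf, Set.indicator_apply, h]

theorem graphPmf_nonneg (hp : ∀ a, 0 ≤ p a) (v : α → β) (q : α × β) : 0 ≤ graphPmf p v q :=
  Set.indicator_nonneg (fun q _ => hp q.1) q

theorem graphPmf_apply_self (v : α → β) (a : α) : graphPmf p v (a, v a) = p a :=
  Set.indicator_of_mem (s := {q : α × β | q.2 = v q.1}) rfl _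

theorem IsPmf.Dinf_graphPmf_le (hp : IsPmf p) (w : α → β) {Q : α × β → ℝ} (hQ : ∀ q, 0 ≤ Q q)
    (G : Set β) {δ K : ℝ} (hK : 1 ≤ K) (hbad : prS p {a | w a ∉ G} ≤ δ)
    (hratio : ∀ a, 0 < p a → w a ∈ G → p a ≤ K * Q (a, w a)) :
    Dinf (graphPmf p w) Q δ ≤ Real.log K := by
  classical
  have hK0 : 0 ≤ K := zero_le_one.trans hK
  set ψ : α × β → ℝ := fun q => if q.2 ∈ G then 1 else 0
  have hψ : ∀ q, 0 ≤ ψ q ∧ ψ q ≤ 1 := fun q => by by_cases h : q.2 ∈ G <;> simp [ψ, h]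
  refine Dinf_le_log_of_witness ψ hψ ?_
    (fun q => div_nonneg (mul_nonneg (hψ q).1 (graphPmf_nonneg hp.1 w q)) (hQ q)) ?_ hK
  · have hmass : ∑' q, ψ q * graphPmf p w q = prS p {a | w a ∈ G} := by
      refine (tsum_congr fun q => ?_).trans (prS_graphPmf w {q | q.2 ∈ G})
      by_cases h : q.2 ∈ G <;> simp [ψ, h]
    have htotal := hp.prS_add_prS_compl {a | w a ∈ G}
    rw [Set.compl_ofPred] at htotal
    linarith
  · rintro ⟨a, b⟩
    by_cases hb : b = w a
    · subst hb
      rw [graphPmf_apply_self]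
      by_cases hG : w a ∈ G
      · rcases (hp.1 a).eq_or_lt with h0 | hpos
        · simp [← h0, hK0]
        · simpa [ψ, hG] using div_le_of_le_mul₀ (hQ _) hK0 (hratio a hpos hG)
      · simp [ψ, hG, hK0]
    · simp [graphPmf, hb, hK0]

theorem IsPmf.Iinf_graphPmf_comp_le [Fintype ι] (hp : IsPmf p) (κ : α → ι) (V : ι → β) {δ : ℝ}
    (hδ : 0 < δ) (hδι : δ ≤ Fintype.card ι) :
    Iinf (graphPmf p fun a => V (κ a)) δ ≤ Real.log (Fintype.card ι / δ) := by
  set M : ℝ := (Fintype.card ι : ℝ)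
  have hM : 0 < M := hδ.trans_le hδι
  set v : α → β := fun a => V (κ a)
  unfold Iinf margFst margSnd
  simp only [tsum_graphPmf_left, tsum_graphPmf_right]
  refine hp.Dinf_graphPmf_le v (fun q => mul_nonneg (hp.1 _) (prS_nonneg hp.1 _))
    {b | δ / M ≤ prS p (v ⁻¹' {b})} ((one_le_div hδ).2 hδι) ?_ ?_
  · calc prS p {a | v a ∉ {b | δ / M ≤ prS p (v ⁻¹' {b})}}
        ≤ prS p {a | prS p (κ ⁻¹' {κ a}) < δ / M} :=
          hp.prS_mono fun a ha => (hp.prS_mono fun _ h => congrArg V h).trans_lt (not_le.1 ha)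
      _ ≤ ∑ _i : ι, δ / M := hp.prS_fiber_lt_le κ fun _ => (div_pos hδ hM).le
      _ = δ := by
        simp only [Finset.sum_const, Finset.card_univ, nsmul_eq_mul]
        exact mul_div_cancel₀ δ hM.ne'
  · intro a _ ha
    have hone : 1 ≤ M / δ * prS p (v ⁻¹' {v a}) := by
      rw [div_mul_eq_mul_div, one_le_div hδ]
      calc δ = M * (δ / M) := by field_simp
        _ ≤ M * prS p (v ⁻¹' {v a}) := mul_le_mul_of_nonneg_left ha hM.le
    exact (le_mul_of_one_le_right (hp.1 a) hone).trans_eq (by ring)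

theorem IsPmf.IinfCond_graphPmf_le [Fintype ι] [Fintype ι'] (hp : IsPmf p) (κ : α → ι)
    (κ' : α → ι') (V : ι → β) (hV : Set.InjOn V (Set.range κ)) (φ : ι → ι' → γ) {δ : ℝ}
    (hδ : 0 < δ) (hδι : δ ≤ Fintype.card ι') :
    IinfCond (graphPmf p fun a => (φ (κ a) (κ' a), V (κ a))) δ
      ≤ Real.log (Fintype.card ι' / δ) := by
  set M : ℝ := (Fintype.card ι' : ℝ)
  have hM : 0 < M := hδ.trans_le hδι
  set v : α → β := fun a => V (κ a)
  set w : α → γ × β := fun a => (φ (κ a) (κ' a), v a)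
  have hfiber : ∀ a, v ⁻¹' {v a} = κ ⁻¹' {κ a} := fun a => by
    ext a'
    exact ⟨fun h => hV ⟨a', rfl⟩ ⟨a, rfl⟩ h, fun h => congrArg V h⟩
  unfold IinfCond
  simp only [tsum_graphPmf_prodMk, tsum_graphPmf_left]
  refine hp.Dinf_graphPmf_le w (fun q => mul_nonneg (graphPmf_nonneg hp.1 v _)
      (div_nonneg (prS_nonneg hp.1 _) (prS_nonneg hp.1 _)))
    {t | δ / M * prS p (v ⁻¹' {t.2}) ≤ prS p (w ⁻¹' {t})} ((one_le_div hδ).2 hδι) ?_ ?_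
  · calc prS p {a | w a ∉ {t | δ / M * prS p (v ⁻¹' {t.2}) ≤ prS p (w ⁻¹' {t})}}
        ≤ prS p {a | prS p ((fun a => (κ a, κ' a)) ⁻¹' {(κ a, κ' a)})
            < δ / M * prS p (κ ⁻¹' {κ a})} := by
          refine hp.prS_mono fun a ha => ?_
          calc prS p ((fun a => (κ a, κ' a)) ⁻¹' {(κ a, κ' a)}) ≤ prS p (w ⁻¹' {w a}) :=
                hp.prS_mono fun a' h => by simp_all [w, v]
            _ < δ / M * prS p (v ⁻¹' {v a}) := not_le.1 ha
            _ = δ / M * prS p (κ ⁻¹' {κ a}) := by rw [hfiber]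
      _ ≤ ∑ i : ι × ι', δ / M * prS p (κ ⁻¹' {i.1}) :=
          hp.prS_fiber_lt_le (fun a => (κ a, κ' a)) (c := fun i => δ / M * prS p (κ ⁻¹' {i.1}))
            fun _ => mul_nonneg (div_pos hδ hM).le (prS_nonneg hp.1 _)
      _ = δ := by
          simp only [Fintype.sum_prod_type, Finset.sum_const, Finset.card_univ, nsmul_eq_mul,
            ← Finset.mul_sum, hp.sum_prS_fiber, mul_one]
          exact div_mul_cancel₀ δ hM.ne'
  · intro a hpos hG
    change p a ≤ M / δ * (graphPmf p v (a, v a) * (prS p (w ⁻¹' {w a}) / prS p (v ⁻¹' {v a})))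
    change δ / M * prS p (v ⁻¹' {v a}) ≤ prS p (w ⁻¹' {w a}) at hG
    have hN : p a ≤ prS p (w ⁻¹' {w a}) := hp.le_prS rfl
    have hNP : prS p (w ⁻¹' {w a}) ≤ prS p (v ⁻¹' {v a}) :=
      hp.prS_mono fun _ h => congrArg Prod.snd h
    have hP : 0 < prS p (v ⁻¹' {v a}) := hpos.trans_le (hN.trans hNP)
    have hone : 1 ≤ M / δ * (prS p (w ⁻¹' {w a}) / prS p (v ⁻¹' {v a})) := by
      rw [div_mul_div_comm, one_le_div (mul_pos hδ hP)]
      calc δ * prS p (v ⁻¹' {v a}) = M * (δ / M * prS p (v ⁻¹' {v a})) := by field_simp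
        _ ≤ M * prS p (w ⁻¹' {w a}) := mul_le_mul_of_nonneg_left hG hM.le
    rw [graphPmf_apply_self]
    exact (le_mul_of_one_le_right (hp.1 a) hone).trans_eq (by ring)

open Classical in
def detChannel (w : α → β) : α → β → ℝ :=
  fun a b => if b = w a then 1 else 0

theorem isPmf_detChannel (w : α → β) (a : α) : IsPmf (detChannel w a) := by
  classical
  exact ⟨fun b => by unfold detChannel; split_ifs <;> norm_num, hasSum_ite_eq (w a) 1⟩

theorem mul_detChannel_eq_graphPmf (w : α → β) :
    (fun q : α × β => p q.1 * detChannel w q.1 q.2) = graphPmf p w := by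
  classical
  funext q
  simp [detChannel, graphPmf, Set.indicator_apply]

theorem mul_tsum_detChannel_eq_graphPmf {δ' : Type*} (w : α → β × γ × δ') :
    (fun q : α × (β × γ) => p q.1 * ∑' z, detChannel w q.1 (q.2.1, q.2.2, z))
      = graphPmf p fun a => ((w a).1, (w a).2.1) := by
  classical
  funext ⟨a, b, c⟩
  have hw : ∀ z, (b, c, z) = w a ↔ (b, c) = ((w a).1, (w a).2.1) ∧ z = (w a).2.2 :=
    fun z => by simp [Prod.ext_iff, and_assoc]
  by_cases h : (b, c) = ((w a).1, (w a).2.1) <;> simp [detChannel, graphPmf, hw, h]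

theorem mul_detChannel_rotate_eq_graphPmf {δ' : Type*} (w : α → β × γ × δ') :
    (fun q : α × δ' × (β × γ) => p q.1 * detChannel w q.1 (q.2.2.1, q.2.2.2, q.2.1))
      = graphPmf p fun a => ((w a).2.2, (w a).1, (w a).2.1) := by
  classical
  funext q
  simp [detChannel, graphPmf, Set.indicator_apply, Prod.ext_iff, and_comm, and_assoc]

end

theorem outer_bound_general {𝒳 𝒴 𝒵 𝒰 : Type*}
    (hU : ∃ f : 𝒳 → 𝒰, Function.Injective f)
    (pX : 𝒳 → ℝ) (hpX : IsPmf pX)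
    (d₁ : 𝒳 → 𝒴 → ℝ) (d₂ : 𝒳 → 𝒵 → ℝ)
    (D₁ D₂ ε₁ ε₂ : ℝ) :
    MSet pX d₁ d₂ D₁ D₂ ε₁ ε₂ ⊆
    { m : ℕ × ℕ |
      ∃ W : 𝒳 → 𝒰 × 𝒴 × 𝒵 → ℝ,
        (∀ x, IsPmf (W x)) ∧
        prS (fun q : 𝒳 × (𝒰 × 𝒴 × 𝒵) => pX q.1 * W q.1 q.2)
          { q | D₁ < d₁ q.1 q.2.2.1 } ≤ ε₁ ∧
        prS (fun q : 𝒳 × (𝒰 × 𝒴 × 𝒵) => pX q.1 * W q.1 q.2)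
          { q | D₂ < d₂ q.1 q.2.2.2 } ≤ ε₂ ∧
        ∀ δ₁ δ₂ : ℝ, δ₁ ∈ Set.Ioc (0:ℝ) 1 → δ₂ ∈ Set.Ioc (0:ℝ) 1 →
          Iinf (fun q : 𝒳 × (𝒰 × 𝒴) =>
              pX q.1 * ∑' z, W q.1 (q.2.1, q.2.2, z)) δ₁
            + Real.log δ₁ ≤ Real.log m.1 ∧
          IinfCond (fun q : 𝒳 × 𝒵 × (𝒰 × 𝒴) =>
              pX q.1 * W q.1 (q.2.2.1, q.2.2.2, q.2.1)) δ₂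
            + Real.log δ₂ ≤ Real.log m.2 } := by
  rintro ⟨M₁, M₂⟩ ⟨hM₁, hM₂, C, hC₁, hC₂⟩
  obtain ⟨emb, hemb⟩ := hU
  have := hpX.nonempty
  set V : Fin M₁ → 𝒰 × 𝒴 := fun i => (emb (Function.invFunOn C.f₁ Set.univ i), C.φ₁ i)
  have hV : Set.InjOn V (Set.range C.f₁) := fun i hi j hj h =>
    hemb.comp_injOn (Set.image_univ ▸ Function.invFunOn_injOn_image C.f₁ Set.univ) hi hj
      (congrArg Prod.fst h)
  refine ⟨detChannel fun x => ((V (C.f₁ x)).1, (V (C.f₁ x)).2, C.φ₂ (C.f₁ x) (C.f₂ x)),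
    isPmf_detChannel _, ?_, ?_, fun δ₁ δ₂ hδ₁ hδ₂ => ⟨?_, ?_⟩⟩
  · rw [mul_detChannel_eq_graphPmf, prS_graphPmf]
    exact hC₁
  · rw [mul_detChannel_eq_graphPmf, prS_graphPmf]
    exact hC₂
  · rw [mul_tsum_detChannel_eq_graphPmf, ← le_sub_iff_add_le,
      ← Real.log_div (by positivity) hδ₁.1.ne']
    simpa using hpX.Iinf_graphPmf_comp_le C.f₁ V hδ₁.1
      (by simpa using hδ₁.2.trans (Nat.one_le_cast.2 hM₁))
  · rw [mul_detChannel_rotate_eq_graphPmf, ← le_sub_iff_add_le,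
      ← Real.log_div (by positivity) hδ₂.1.ne']
    simpa using hpX.IinfCond_graphPmf_le C.f₁ C.f₂ V hV C.φ₂ hδ₂.1
      (by simpa using hδ₂.2.trans (Nat.one_le_cast.2 hM₂))

/-- Theorem 3, outer bound on the set of pairs of numbers of
codewords.  The hypothesis `hU` expresses `|𝒰| ≥ |𝒳|`.  The right-hand side is
the union over `P_{UYZ|X} ∈ 𝒫(D,ε|X)` of the intersection over
`δ = (δ₁,δ₂) ∈ (0,1]²` of `𝓜_O(δ,P_{UYZ|X})`. -/
theorem outer_bound {𝒳 𝒴 𝒵 𝒰 : Type*}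
    [Countable 𝒳] [Countable 𝒴] [Countable 𝒵] [Countable 𝒰]
    (hU : ∃ f : 𝒳 → 𝒰, Function.Injective f)
    (pX : 𝒳 → ℝ) (hpX : IsPmf pX)
    (d₁ : 𝒳 → 𝒴 → ℝ) (d₂ : 𝒳 → 𝒵 → ℝ)
    (hd₁ : ∀ x y, 0 ≤ d₁ x y) (hd₂ : ∀ x z, 0 ≤ d₂ x z)
    (D₁ D₂ ε₁ ε₂ : ℝ) (hD₁ : 0 ≤ D₁) (hD₂ : 0 ≤ D₂)
    (hε₁ : 0 < ε₁) (hε₂ : 0 < ε₂) :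
    MSet pX d₁ d₂ D₁ D₂ ε₁ ε₂ ⊆
    { m : ℕ × ℕ |
      ∃ W : 𝒳 → 𝒰 × 𝒴 × 𝒵 → ℝ,
        (∀ x, IsPmf (W x)) ∧
        prS (fun q : 𝒳 × (𝒰 × 𝒴 × 𝒵) => pX q.1 * W q.1 q.2)
          { q | D₁ < d₁ q.1 q.2.2.1 } ≤ ε₁ ∧
        prS (fun q : 𝒳 × (𝒰 × 𝒴 × 𝒵) => pX q.1 * W q.1 q.2)
          { q | D₂ < d₂ q.1 q.2.2.2 } ≤ ε₂ ∧
        ∀ δ₁ δ₂ : ℝ, δ₁ ∈ Set.Ioc (0:ℝ) 1 → δ₂ ∈ Set.Ioc (0:ℝ) 1 →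
          Iinf (fun q : 𝒳 × (𝒰 × 𝒴) =>
              pX q.1 * ∑' z, W q.1 (q.2.1, q.2.2, z)) δ₁
            + Real.log δ₁ ≤ Real.log m.1 ∧
          IinfCond (fun q : 𝒳 × 𝒵 × (𝒰 × 𝒴) =>
              pX q.1 * W q.1 (q.2.2.1, q.2.2.2, q.2.1)) δ₂
            + Real.log δ₂ ≤ Real.log m.2 } :=
  outer_bound_general hU pX hpX d₁ d₂ D₁ D₂ ε₁ ε₂
end
end

section
/- Let g : 𝒜 → ℬ × 𝒞 be a function between finite or countably infinite sets, and for c ∈ 𝒞 let ‖g‖_c denote the number of b ∈ ℬ such that g(a) = (b, c) for some a ∈ 𝒜. Let A be any random variable on 𝒜 and set (B, C) = g(A). Then for any δ ∈ (0, 1], log sup_{c ∈ 𝒞} ‖g‖_c ≥ I_∞^δ(A; B | C) + log δ. -/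
open scoped BigOperators
open Filter Topology

noncomputable section

/-! Let `K = sup_c ‖g‖_c` and call `(b, c)` light if `K · P_{BC}(b, c) < δ · P_C(c)`. For each `c`
at most `K` values of `b` have positive mass, so the light pairs with second coordinate `c` carry
mass at most `δ · P_C(c)`, and all light pairs together have probability at most `δ`. The test `ψ`
discarding them is therefore admissible, and elsewhere `P_{ABC} ≤ P_{AC}` bounds the likelihood
ratio `P_{ABC} / (P_{AC} · P_{B|C})` by `P_C / P_{BC} ≤ K / δ`. -/

open scoped ENNReal NNReal

theorem Summable.hasSum_tsum_tsum {E α β γ : Type*} [NormedAddCommGroup E] [CompleteSpace E]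
    {f : α × β × γ → E} (hf : Summable f) :
    HasSum (fun c => ∑' b, ∑' a, f (a, b, c)) (∑' x, f x) := by
  let e : γ × β × α ≃ α × β × γ :=
    ⟨fun y => (y.2.2, y.2.1, y.1), fun x => (x.2.2, x.2.1, x.1), fun _ => rfl, fun _ => rfl⟩
  have he : Summable (f ∘ e) := e.summable_iff.mpr hf
  rw [← e.tsum_eq]
  refine he.hasSum.prod_fiberwise fun c => ?_
  have h := (he.prod_factor c).hasSum
  rwa [(he.prod_factor c).tsum_prod] at h

theorem tsum_ite_mul_lt_le {β : Type*} {f : β → ℝ} {k : ℝ≥0} (hk : 0 < k)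
    (hsupp : ((Function.support f).encard : ℝ≥0∞) ≤ k) {t : ℝ} (ht : 0 ≤ t) :
    ∑' b, (if k * f b < t then f b else 0) ≤ t := by
  have hfin : (Function.support f).Finite := by
    rw [← Set.encard_lt_top_iff]
    exact_mod_cast (hsupp.trans_lt ENNReal.coe_lt_top)
  have hcard : (hfin.toFinset.card : ℝ) ≤ k := by
    rw [hfin.encard_eq_coe_toFinset_card] at hsupp
    have : ((hfin.toFinset.card : ℝ≥0) : ℝ≥0∞) ≤ k := by simpa using hsupp
    exact_mod_cast ENNReal.coe_le_coe.mp this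
  rw [tsum_eq_sum (s := hfin.toFinset) fun b hb => by simp_all]
  calc ∑ b ∈ hfin.toFinset, (if k * f b < t then f b else 0)
      ≤ hfin.toFinset.card • (t / k) := by
        refine Finset.sum_le_card_nsmul _ _ _ fun b _ => ?_
        split_ifs with h
        · rw [le_div_iff₀ (by exact_mod_cast hk), mul_comm]; exact h.le
        · positivity
    _ ≤ k * (t / k) := by
        rw [nsmul_eq_mul]; gcongr
    _ = t := mul_div_cancel₀ _ (by exact_mod_cast hk.ne')

theorem div_mul_div_le_div {r x y z k δ : ℝ} (hr : 0 ≤ r) (hrx : r ≤ x) (hy : 0 ≤ y)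
    (hz : 0 ≤ z) (hk : 0 ≤ k) (hδ : 0 < δ) (h : δ * z ≤ k * y) :
    r / (x * (y / z)) ≤ k / δ := by
  have hzy : z / y ≤ k / δ := by
    rcases hy.eq_or_lt with rfl | hy
    · rw [div_zero]; positivity
    · rw [div_le_div_iff₀ hy hδ]; linarith
  calc r / (x * (y / z)) = r / x * (z / y) := by
        rw [mul_div_assoc', div_div_eq_mul_div, mul_div_mul_comm]
    _ ≤ 1 * (k / δ) := mul_le_mul (div_le_one_of_le₀ hrx (hr.trans hrx)) hzy (by positivity)
        zero_le_one
    _ = k / δ := one_mul _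

theorem Dinf_le_log {α : Type*} {P Q : α → ℝ} {δ t : ℝ} (hP : ∀ a, 0 ≤ P a) (hQ : ∀ a, 0 ≤ Q a)
    (ψ : α → ℝ) (hψ : ∀ a, 0 ≤ ψ a ∧ ψ a ≤ 1) (hmass : 1 - δ ≤ ∑' a, ψ a * P a)
    (ht : 1 ≤ t) (hratio : ∀ a, ψ a * P a / Q a ≤ t) :
    Dinf P Q δ ≤ Real.log t := by
  refine csInf_le_of_le ⟨0, ?_⟩ ⟨ψ, hψ, hmass, rfl⟩ (max_le (Real.log_nonneg ht) ?_)
  · rintro d ⟨-, -, -, rfl⟩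
    exact le_max_left _ _
  rcases (Real.iSup_nonneg fun a => div_nonneg (mul_nonneg (hψ a).1 (hP a)) (hQ a)).eq_or_lt
    with h | h
  · rw [← h, Real.log_zero]; exact Real.log_nonneg ht
  · exact Real.log_le_log h (Real.iSup_le hratio (zero_le_one.trans ht))

section Marginals

variable {α β γ : Type*}

def margAC (π : α × β × γ → ℝ) (a : α) (c : γ) : ℝ := ∑' b, π (a, b, c)

def margBC (π : α × β × γ → ℝ) (b : β) (c : γ) : ℝ := ∑' a, π (a, b, c)

def margC (π : α × β × γ → ℝ) (c : γ) : ℝ := ∑' a, ∑' b, π (a, b, c)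

theorem IinfCond_eq_Dinf (π : α × β × γ → ℝ) (δ : ℝ) :
    IinfCond π δ =
      Dinf π (fun x => margAC π x.1 x.2.2 * (margBC π x.2.1 x.2.2 / margC π x.2.2)) δ :=
  rfl

variable {π : α × β × γ → ℝ}

theorem le_margAC (hπ0 : ∀ x, 0 ≤ π x) (hπ : Summable π) (a : α) (b : β) (c : γ) :
    π (a, b, c) ≤ margAC π a c :=
  (hπ.comp_injective (i := fun b => (a, b, c)) fun _ _ h => by simpa using h).le_tsum b
    fun _ _ => hπ0 _

theorem le_margBC (hπ0 : ∀ x, 0 ≤ π x) (hπ : Summable π) (a : α) (b : β) (c : γ) :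
    π (a, b, c) ≤ margBC π b c :=
  (hπ.comp_injective (i := fun a => (a, b, c)) fun _ _ h => by simpa using h).le_tsum a
    fun _ _ => hπ0 _

theorem margC_eq_tsum_margBC (hπ : Summable π) (c : γ) :
    margC π c = ∑' b, margBC π b c :=
  (Summable.tsum_comm (f := fun a b => π (a, b, c)) <|
    hπ.comp_injective fun _ _ h => by simpa [Prod.ext_iff] using h).symm

end Marginals

theorem IinfCond_le_log_div {α β γ : Type*} {π : α × β × γ → ℝ} (hπ0 : ∀ x, 0 ≤ π x)
    (hπ : HasSum π 1) {δ : ℝ} (hδ : 0 < δ) {k : ℝ≥0} (hδk : δ ≤ k)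
    (hsupp : ∀ c, ((Function.support fun b => margBC π b c).encard : ℝ≥0∞) ≤ k) :
    IinfCond π δ ≤ Real.log (k / δ) := by
  have hk : 0 < k := by exact_mod_cast hδ.trans_le hδk
  have hmargC : ∀ c, 0 ≤ margC π c := fun c => tsum_nonneg fun _ => tsum_nonneg fun _ => hπ0 _
  set low : β × γ → Prop := fun y => k * margBC π y.1 y.2 < δ * margC π y.2
  set lowPart : α × β × γ → ℝ := fun x => if low x.2 then π x else 0
  have hlowPart : Summable lowPart := hπ.summable.of_nonneg_of_le
    (fun x => by dsimp only [lowPart]; split_ifs <;> simp [hπ0]) fun x => by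
      dsimp only [lowPart]; split_ifs <;> simp [hπ0]
  have hlow : ∑' x, lowPart x ≤ δ := by
    have hone := hπ.summable.hasSum_tsum_tsum
    rw [hπ.tsum_eq] at hone
    refine (hasSum_le (fun c => ?_) hlowPart.hasSum_tsum_tsum
      (hone.mul_left δ)).trans_eq (mul_one δ)
    change _ ≤ δ * ∑' b, margBC π b c
    rw [← margC_eq_tsum_margBC hπ.summable]
    have hinner : ∀ b, ∑' a, lowPart (a, b, c) =
        if k * margBC π b c < δ * margC π c then margBC π b c else 0 := fun b => by
      dsimp only [lowPart, low]; split_ifs <;> simp [margBC]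
    rw [tsum_congr hinner]
    exact tsum_ite_mul_lt_le hk (hsupp c) (mul_nonneg hδ.le (hmargC c))
  let ψ : α × β × γ → ℝ := fun x => if low x.2 then 0 else 1
  have hψ : HasSum (fun x => ψ x * π x) (1 - ∑' x, lowPart x) := by
    refine (hπ.sub hlowPart.hasSum).congr_fun fun x => ?_
    dsimp only [ψ, lowPart]
    split_ifs <;> ring
  rw [IinfCond_eq_Dinf]
  refine Dinf_le_log hπ0 (fun x => ?_) ψ (fun x => ?_) (by linarith [hψ.tsum_eq])
    ((one_le_div hδ).mpr hδk) ?_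
  · exact mul_nonneg (tsum_nonneg fun _ => hπ0 _)
      (div_nonneg (tsum_nonneg fun _ => hπ0 _) (hmargC _))
  · dsimp only [ψ]; split_ifs <;> norm_num
  · rintro ⟨a, b, c⟩
    dsimp only [ψ]
    split_ifs with h
    · rw [zero_mul, zero_div]; positivity
    · rw [one_mul]
      exact div_mul_div_le_div (hπ0 _) (le_margAC hπ0 hπ.summable a b c)
        (tsum_nonneg fun _ => hπ0 _) (hmargC c) k.2 hδ (not_lt.mp h)

theorem IinfCond_add_log_le {α β γ : Type*} {π : α × β × γ → ℝ} (hπ0 : ∀ x, 0 ≤ π x)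
    (hπ : HasSum π 1) {δ : ℝ} (hδ : 0 < δ) (hδ1 : δ ≤ 1) {K : ℝ≥0∞}
    (hsupp : ∀ c, ((Function.support fun b => margBC π b c).encard : ℝ≥0∞) ≤ K) :
    ((IinfCond π δ + Real.log δ : ℝ) : EReal) ≤ ENNReal.log K := by
  induction K using ENNReal.recTopCoe with
  | top => simp
  | coe k =>
    obtain ⟨x, hx⟩ : ∃ x, π x ≠ 0 := by
      by_contra! h
      exact one_ne_zero (hπ.unique (by simp [funext h]))
    have hx' : 0 < margBC π x.2.1 x.2.2 :=
      ((hπ0 x).lt_of_ne hx.symm).trans_le (le_margBC hπ0 hπ.summable x.1 x.2.1 x.2.2)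
    have hne : (Function.support fun b => margBC π b x.2.2).Nonempty := ⟨x.2.1, hx'.ne'⟩
    have hK1 : (1 : ℝ≥0∞) ≤ k :=
      le_trans (by exact_mod_cast Set.one_le_encard_iff_nonempty.mpr hne) (hsupp x.2.2)
    have hk1 : (1 : ℝ) ≤ k := by exact_mod_cast hK1
    have h := IinfCond_le_log_div hπ0 hπ hδ (hδ1.trans hk1) hsupp
    rw [Real.log_div (by positivity) hδ.ne'] at h
    have hk0 : k ≠ 0 := by rintro rfl; norm_num at hk1
    rw [ENNReal.log_of_nnreal hk0, EReal.coe_le_coe_iff]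
    linarith

section Graph

variable {α β γ : Type*} (g : α → β × γ)

theorem hasSum_indicator_graph {p : α → ℝ} {s : ℝ} (hp : HasSum p s) :
    HasSum (Set.indicator {x : α × β × γ | g x.1 = (x.2.1, x.2.2)} fun x => p x.1) s := by
  set π := Set.indicator {x : α × β × γ | g x.1 = (x.2.1, x.2.2)} fun x => p x.1
  have hinj : Function.Injective fun a => ((a, g a) : α × β × γ) := fun _ _ h => congrArg Prod.fst h
  have hgraph : ∀ a, π (a, g a) = p a := fun a => by simp [π]
  have hoff : ∀ x ∉ Set.range fun a => ((a, g a) : α × β × γ), π x = 0 := by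
    rintro ⟨a, b, c⟩ hx
    simp only [π, Set.indicator_apply_eq_zero, Set.mem_ofPred_eq]
    exact fun h => absurd ⟨a, by simp [h]⟩ hx
  exact (hinj.hasSum_iff hoff).mp (hp.congr_fun hgraph)

theorem support_margBC_indicator_graph_subset (p : α → ℝ) (c : γ) :
    (Function.support fun b =>
        margBC (Set.indicator {x : α × β × γ | g x.1 = (x.2.1, x.2.2)} fun x => p x.1) b c) ⊆
      {b | ∃ a, g a = (b, c)} := by
  intro b hb
  by_contra h
  refine hb ((tsum_congr fun a => ?_).trans tsum_zero)
  exact Set.indicator_of_notMem (s := {x : α × β × γ | g x.1 = (x.2.1, x.2.2)})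
    (a := (a, b, c)) (fun ha => h ⟨a, ha⟩) _

end Graph

theorem log_image_size_ge_general {α β γ : Type*}
    (g : α → β × γ) (p : α → ℝ) (hp : IsPmf p)
    (δ : ℝ) (hδ : δ ∈ Set.Ioc (0:ℝ) 1) :
    ((IinfCond
        (Set.indicator {x : α × β × γ | g x.1 = (x.2.1, x.2.2)} fun x => p x.1) δ
      + Real.log δ : ℝ) : EReal) ≤
    ENNReal.log (⨆ c : γ, (Set.encard {b : β | ∃ a, g a = (b, c)} : ENNReal)) := by
  obtain ⟨hp0, hp1⟩ := hp
  refine IinfCond_add_log_le (Set.indicator_nonneg fun x _ => hp0 x.1)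
    (hasSum_indicator_graph g hp1) hδ.1 hδ.2 fun c => ?_
  refine le_trans ?_ (le_iSup (fun c => (Set.encard {b : β | ∃ a, g a = (b, c)} : ℝ≥0∞)) c)
  exact_mod_cast Set.encard_mono (support_margBC_indicator_graph_subset g p c)

/-- Lemma 4.  `(B,C) = g(A)`, so the joint pmf of `(A,B,C)`
puts mass `p a` on `(a, g a)`.  `‖g‖_c` is formalized as the extended
cardinality of `{b | ∃ a, g a = (b,c)}`, the supremum and the logarithm being
taken in `ℝ≥0∞` and `EReal` respectively, so that infinite image sizes are
handled correctly. -/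
theorem log_image_size_ge {α β γ : Type*} [Countable α] [Countable β] [Countable γ]
    (g : α → β × γ) (p : α → ℝ) (hp : IsPmf p)
    (δ : ℝ) (hδ : δ ∈ Set.Ioc (0:ℝ) 1) :
    ((IinfCond
        (Set.indicator {x : α × β × γ | g x.1 = (x.2.1, x.2.2)} fun x => p x.1) δ
      + Real.log δ : ℝ) : EReal) ≤
    ENNReal.log (⨆ c : γ, (Set.encard {b : β | ∃ a, g a = (b, c)} : ENNReal)) :=
  log_image_size_ge_general g p hp δ hδ
end
end
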